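/- Let q ≥ 2 and let a be coprime to q with 1 ≤ a < q, and write a/q = [0; c_1, …, c_s]. If c_j ≤ M for all j ∈ [s], then every solution (x, y) of the congruence a·x ≡ y (mod q) with 1 ≤ x < q and 1 ≤ |y| < q satisfies x·|y| ≥ q/(4M). -/

import Mathlib

/-! Let `q_k` be the denominators of the convergents `p_k/q_k` of `a/q` and let
`r_k = |a q_k - q p_k|`, which are the remainders of Euclid's algorithm on `(q, a)`.
Choose `j` with `q_j ≤ x < q_{j+1}`. Writing `(x, m)` in the unimodular basis
`(q_j, p_j), (q_{j+1}, p_{j+1})`, the coefficients have opposite signs, and so do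
`a q_j - q p_j` and `a q_{j+1} - q p_{j+1}`; hence `|y| = |a x - q m| ≥ r_j`. On the other hand
`q = q_{j+1} r_j + q_j r_{j+1} ≤ (c_{j+1} + 2) q_j r_j`, so `q ≤ (M + 2) x |y| ≤ 4 M x |y|`. -/

/-- The value of the finite regular continued fraction `[0; c₁, …, c_s]`. -/
def cfVal : List ℕ → ℚ
  | [] => 0
  | c :: rest => 1 / (c + cfVal rest)

/-- `c` is the regular continued fraction expansion of `a/q`:
nonempty, positive partial quotients, last quotient at least `2`, value `a/q`. -/
def IsCF (a q : ℕ) (c : List ℕ) : Prop :=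
  c ≠ [] ∧ (∀ x ∈ c, 1 ≤ x) ∧ 2 ≤ c.getLast! ∧ cfVal c = (a : ℚ) / q

section ContinuantRecurrence

variable (c : ℕ → ℤ)

/- Indices are shifted by one against the paper: with `c k = c_{k+1}`, the convergent
`[0; c_1, …, c_k] = p_k/q_k` has `p_k = continuant c 1 0 (k + 1)`, `q_k = continuant c 0 1 (k + 1)`,
and `euclidRem c q a (k + 1) = ± (a q_k - q p_k)`. -/
def continuant (u₀ u₁ : ℤ) : ℕ → ℤ
  | 0 => u₀
  | 1 => u₁
  | k + 2 => c k * continuant u₀ u₁ (k + 1) + continuant u₀ u₁ k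

def euclidRem (q a : ℤ) : ℕ → ℤ
  | 0 => q
  | 1 => a
  | k + 2 => euclidRem q a k - c k * euclidRem q a (k + 1)

theorem continuant_casoratian (u₀ u₁ v₀ v₁ : ℤ) (k : ℕ) :
    continuant c u₀ u₁ (k + 1) * continuant c v₀ v₁ k
      - continuant c u₀ u₁ k * continuant c v₀ v₁ (k + 1) = (-1) ^ k * (u₁ * v₀ - u₀ * v₁) := by
  induction k with
  | zero => simp [continuant]
  | succ k ih =>
    rw [continuant, continuant, pow_succ]
    linear_combination -ih

theorem continuant_mul_euclidRem (u₀ u₁ q a : ℤ) (k : ℕ) :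
    continuant c u₀ u₁ (k + 1) * euclidRem c q a k
      + continuant c u₀ u₁ k * euclidRem c q a (k + 1) = u₁ * q + u₀ * a := by
  induction k with
  | zero => simp [continuant, euclidRem]
  | succ k ih =>
    rw [continuant, euclidRem]
    linear_combination ih

theorem mul_continuant_sub_mul_continuant_eq (q a : ℤ) (k : ℕ) :
    a * continuant c 0 1 k - q * continuant c 1 0 k = (-1) ^ (k + 1) * euclidRem c q a k := by
  have hden := continuant_mul_euclidRem c 0 1 q a k
  have hnum := continuant_mul_euclidRem c 1 0 q a k
  have hdet := continuant_casoratian c 1 0 0 1 k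
  linear_combination
    -continuant c 0 1 k * hnum + continuant c 1 0 k * hden + euclidRem c q a k * hdet

theorem exists_eq_continuant_and_abs_sub_eq (q a z m : ℤ) (j : ℕ) :
    ∃ u v : ℤ, z = u * continuant c 0 1 j + v * continuant c 0 1 (j + 1) ∧
      |a * z - q * m| = |u * euclidRem c q a j - v * euclidRem c q a (j + 1)| := by
  set ε : ℤ := (-1) ^ j
  have hε : ε * ε = 1 := by rw [← mul_pow]; norm_num
  have hdet : continuant c 1 0 (j + 1) * continuant c 0 1 j
      - continuant c 1 0 j * continuant c 0 1 (j + 1) = -ε := by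
    simpa using continuant_casoratian c 1 0 0 1 j
  set u := -ε * (z * continuant c 1 0 (j + 1) - m * continuant c 0 1 (j + 1))
  set v := -ε * (m * continuant c 0 1 j - z * continuant c 1 0 j)
  have hz : z = u * continuant c 0 1 j + v * continuant c 0 1 (j + 1) := by
    linear_combination (ε * z) * hdet - z * hε
  have hm : m = u * continuant c 1 0 j + v * continuant c 1 0 (j + 1) := by
    linear_combination (ε * m) * hdet - m * hε
  refine ⟨u, v, hz, ?_⟩
  have hD := mul_continuant_sub_mul_continuant_eq c q a j
  have hD' := mul_continuant_sub_mul_continuant_eq c q a (j + 1)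
  have hsplit :
      a * z - q * m = (-1) ^ (j + 1) * (u * euclidRem c q a j - v * euclidRem c q a (j + 1)) := by
    rw [pow_succ] at hD'
    linear_combination a * hz - q * hm + u * hD + v * hD'
  rw [hsplit, abs_mul, abs_neg_one_pow, one_mul]

theorem continuant_nonneg_and_le_succ {n : ℕ} (hc : ∀ k < n, 1 ≤ c k) :
    ∀ k ≤ n, 0 ≤ continuant c 0 1 k ∧ continuant c 0 1 k ≤ continuant c 0 1 (k + 1) := by
  intro k
  induction k with
  | zero => intro _; simp [continuant]
  | succ k ih =>
    intro hk
    obtain ⟨h0, hle⟩ := ih (by omega)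
    have hck := hc k (by omega)
    refine ⟨h0.trans hle, ?_⟩
    show _ ≤ c k * _ + _
    nlinarith

theorem exists_continuant_le_lt {c : ℕ → ℤ} {x : ℤ} {n : ℕ} (hx : 1 ≤ x)
    (hxn : x < continuant c 0 1 (n + 1)) :
    ∃ i < n, continuant c 0 1 (i + 1) ≤ x ∧ x < continuant c 0 1 (i + 2) := by
  classical
  have hex : ∃ N, x < continuant c 0 1 N := ⟨n + 1, hxn⟩
  obtain ⟨N, hN, hmin⟩ : ∃ N, x < continuant c 0 1 N ∧ ∀ k < N, ¬ x < continuant c 0 1 k :=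
    ⟨Nat.find hex, Nat.find_spec hex, fun _ => Nat.find_min hex⟩
  have hNle : N ≤ n + 1 := by
    by_contra h
    exact hmin (n + 1) (by omega) hxn
  have hN0 : N ≠ 0 := by
    rintro rfl
    simp only [continuant] at hN
    omega
  have hN1 : N ≠ 1 := by
    rintro rfl
    simp only [continuant] at hN
    omega
  obtain ⟨i, rfl⟩ : ∃ i, N = i + 2 := ⟨N - 2, by omega⟩
  exact ⟨i, by omega, not_lt.mp (hmin (i + 1) (by omega)), hN⟩

end ContinuantRecurrence

theorem cfVal_nonneg (l : List ℕ) : 0 ≤ cfVal l := by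
  cases l with
  | nil => simp [cfVal]
  | cons x r =>
    simp only [cfVal]
    have := cfVal_nonneg r
    positivity

theorem cfVal_le_one {l : List ℕ} (hl : ∀ x ∈ l, 1 ≤ x) : cfVal l ≤ 1 := by
  cases l with
  | nil => simp [cfVal]
  | cons x r =>
    have hx : (1 : ℚ) ≤ x := by exact_mod_cast hl x List.mem_cons_self
    have := cfVal_nonneg r
    rw [cfVal, div_le_one (by linarith)]
    linarith

theorem cfVal_pos {l : List ℕ} (hl : ∀ x ∈ l, 1 ≤ x) (hne : l ≠ []) : 0 < cfVal l := by
  obtain ⟨x, r, rfl⟩ := List.exists_cons_of_ne_nil hne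
  have hx : (1 : ℚ) ≤ x := by exact_mod_cast hl x List.mem_cons_self
  rw [cfVal, one_div_pos]
  linarith [cfVal_nonneg r]

theorem List.getD_mem {l : List ℕ} {k : ℕ} (hk : k < l.length) : l.getD k 0 ∈ l := by
  rw [List.getD_eq_getElem l 0 hk]
  exact List.getElem_mem hk

theorem cfVal_drop {l : List ℕ} {k : ℕ} (hk : k < l.length) :
    cfVal (l.drop k) = 1 / (l.getD k 0 + cfVal (l.drop (k + 1))) := by
  rw [List.getD_eq_getElem l 0 hk, List.drop_eq_getElem_cons hk, cfVal]

def partialQuot (l : List ℕ) (k : ℕ) : ℤ := l.getD k 0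

theorem one_le_partialQuot {l : List ℕ} (hl : ∀ x ∈ l, 1 ≤ x) {k : ℕ} (hk : k < l.length) :
    1 ≤ partialQuot l k := by
  unfold partialQuot
  exact_mod_cast hl _ (List.getD_mem hk)

theorem le_abs_mul_sub_mul {r₀ r₁ Q₀ Q₁ u v : ℤ} (hr₀ : 0 ≤ r₀) (hr₁ : 0 ≤ r₁) (hQ₀ : 0 ≤ Q₀)
    (hpos : 0 < u * Q₀ + v * Q₁) (hlt : u * Q₀ + v * Q₁ < Q₁) : r₀ ≤ |u * r₀ - v * r₁| := by
  rcases lt_trichotomy u 0 with hu | rfl | hu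
  · have hv : 0 ≤ v := by nlinarith
    rw [abs_sub_comm]
    exact (le_abs_self _).trans' (by nlinarith)
  · simp only [zero_mul, zero_add] at hpos hlt
    rcases le_or_gt v 0 with hv | hv <;> nlinarith
  · have hv : v ≤ 0 := by nlinarith
    exact (le_abs_self _).trans' (by nlinarith)

section Remainders

variable {l : List ℕ} {q a : ℤ}

theorem euclidRem_succ_eq_cfVal_drop_mul (hl : ∀ x ∈ l, 1 ≤ x)
    (ha : (a : ℚ) = cfVal l * q) :
    ∀ k ≤ l.length, (euclidRem (partialQuot l) q a (k + 1) : ℚ)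
      = cfVal (l.drop k) * euclidRem (partialQuot l) q a k := by
  intro k
  induction k with
  | zero => intro _; simpa [euclidRem] using ha
  | succ k ih =>
    intro hk
    have hdrop := cfVal_drop (show k < l.length by omega)
    have hsum : (0 : ℚ) < l.getD k 0 + cfVal (l.drop (k + 1)) := by
      have : (1 : ℚ) ≤ l.getD k 0 := by exact_mod_cast hl _ (List.getD_mem (by omega))
      linarith [cfVal_nonneg (l.drop (k + 1))]
    have hinv : (l.getD k 0 + cfVal (l.drop (k + 1))) * cfVal (l.drop k) = 1 := by
      rw [hdrop, mul_one_div_cancel hsum.ne']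
    rw [euclidRem]
    push_cast [partialQuot]
    linear_combination (-(l.getD k 0 + cfVal (l.drop (k + 1)) : ℚ)) * ih (by omega)
      - (euclidRem (partialQuot l) q a k : ℚ) * hinv

theorem euclidRem_pos (hl : ∀ x ∈ l, 1 ≤ x) (ha : (a : ℚ) = cfVal l * q) (hq : 0 < q) :
    ∀ k ≤ l.length, 0 < euclidRem (partialQuot l) q a k := by
  intro k
  induction k with
  | zero => intro _; exact hq
  | succ k ih =>
    intro hk
    have hrec := euclidRem_succ_eq_cfVal_drop_mul hl ha k (by omega)
    have ht : 0 < cfVal (l.drop k) := cfVal_pos (fun x hx => hl x (List.mem_of_mem_drop hx))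
      (by rw [Ne, List.drop_eq_nil_iff]; omega)
    have hr : (0 : ℚ) < euclidRem (partialQuot l) q a k := by exact_mod_cast ih (by omega)
    exact_mod_cast hrec ▸ mul_pos ht hr

theorem euclidRem_succ_le (hl : ∀ x ∈ l, 1 ≤ x) (ha : (a : ℚ) = cfVal l * q) (hq : 0 < q)
    {k : ℕ} (hk : k ≤ l.length) :
    euclidRem (partialQuot l) q a (k + 1) ≤ euclidRem (partialQuot l) q a k := by
  have hrec := euclidRem_succ_eq_cfVal_drop_mul hl ha k hk
  have ht := cfVal_le_one (fun x hx => hl x (List.mem_of_mem_drop hx) : ∀ x ∈ l.drop k, 1 ≤ x)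
  have hr : (0 : ℚ) < euclidRem (partialQuot l) q a k := by
    exact_mod_cast euclidRem_pos hl ha hq k hk
  have : (euclidRem (partialQuot l) q a (k + 1) : ℚ) ≤ euclidRem (partialQuot l) q a k := by
    rw [hrec]; nlinarith
  exact_mod_cast this

theorem euclidRem_length_succ (hl : ∀ x ∈ l, 1 ≤ x) (ha : (a : ℚ) = cfVal l * q) :
    euclidRem (partialQuot l) q a (l.length + 1) = 0 := by
  have hrec := euclidRem_succ_eq_cfVal_drop_mul hl ha l.length le_rfl
  rw [List.drop_length, cfVal, zero_mul] at hrec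
  exact_mod_cast hrec

theorem euclidRem_nonneg (hl : ∀ x ∈ l, 1 ≤ x) (ha : (a : ℚ) = cfVal l * q) (hq : 0 < q)
    {k : ℕ} (hk : k ≤ l.length + 1) : 0 ≤ euclidRem (partialQuot l) q a k := by
  rcases Nat.lt_or_ge k (l.length + 1) with hk' | hk'
  · exact (euclidRem_pos hl ha hq k (by omega)).le
  · rw [show k = l.length + 1 by omega, euclidRem_length_succ hl ha]

theorem continuant_length_succ (hl : ∀ x ∈ l, 1 ≤ x) (ha : (a : ℚ) = cfVal l * q) (hq : 0 < q)
    (hco : IsCoprime q a) : continuant (partialQuot l) 0 1 (l.length + 1) = q := by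
  have hlast := euclidRem_length_succ hl ha
  have hden := continuant_mul_euclidRem (partialQuot l) 0 1 q a l.length
  have hnum := continuant_mul_euclidRem (partialQuot l) 1 0 q a l.length
  rw [hlast] at hden hnum
  have hgcd : euclidRem (partialQuot l) q a l.length = 1 := by
    have hunit := hco.isUnit_of_dvd' (x := euclidRem (partialQuot l) q a l.length)
      ⟨continuant (partialQuot l) 0 1 (l.length + 1), by linear_combination -hden⟩
      ⟨continuant (partialQuot l) 1 0 (l.length + 1), by linear_combination -hnum⟩
    have hpos := euclidRem_pos hl ha hq l.length le_rfl
    rcases Int.isUnit_iff.mp hunit with h | h <;> omega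
  linear_combination hden - continuant (partialQuot l) 0 1 (l.length + 1) * hgcd

theorem euclidRem_le_abs_sub (hl : ∀ x ∈ l, 1 ≤ x) (ha : (a : ℚ) = cfVal l * q) (hq : 0 < q)
    {j : ℕ} (hj : j ≤ l.length) {z : ℤ} (m : ℤ) (hz : 0 < z)
    (hzj : z < continuant (partialQuot l) 0 1 (j + 1)) :
    euclidRem (partialQuot l) q a j ≤ |a * z - q * m| := by
  obtain ⟨u, v, hzuv, habs⟩ := exists_eq_continuant_and_abs_sub_eq (partialQuot l) q a z m j
  rw [habs]
  exact le_abs_mul_sub_mul (euclidRem_nonneg hl ha hq (by omega))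
    (euclidRem_nonneg hl ha hq (by omega))
    (continuant_nonneg_and_le_succ _ (fun _ hk => one_le_partialQuot hl hk) j hj).1
    (hzuv ▸ hz) (hzuv ▸ hzj)

theorem le_mul_continuant_mul_euclidRem (hl : ∀ x ∈ l, 1 ≤ x) (ha : (a : ℚ) = cfVal l * q)
    (hq : 0 < q) {i : ℕ} (hi : i < l.length) :
    q ≤ (partialQuot l i + 2) *
      (continuant (partialQuot l) 0 1 (i + 1) * euclidRem (partialQuot l) q a (i + 1)) := by
  have hid := continuant_mul_euclidRem (partialQuot l) 0 1 q a (i + 1)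
  have hrec : continuant (partialQuot l) 0 1 (i + 2) =
      partialQuot l i * continuant (partialQuot l) 0 1 (i + 1) + continuant (partialQuot l) 0 1 i :=
    rfl
  obtain ⟨hQ₀, hQ⟩ :=
    continuant_nonneg_and_le_succ _ (fun _ hk => one_le_partialQuot hl hk) i hi.le
  have hr := euclidRem_pos hl ha hq (i + 1) hi
  have hr' := euclidRem_succ_le hl ha hq (k := i + 1) hi
  rw [hrec] at hid
  nlinarith

end Remainders

theorem stmt_1_general (q a : ℕ) (hco : Nat.Coprime a q) (c : List ℕ) (hc : IsCF a q c) (M : ℝ) (hM : 1 ≤ M)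
    (hbdd : ∀ cj ∈ c, (cj : ℝ) ≤ M) :
    ∀ x y : ℤ, 1 ≤ x → x < (q : ℤ) → 1 ≤ |y| → |y| < (q : ℤ) →
      (a : ℤ) * x ≡ y [ZMOD (q : ℤ)] → (q : ℝ) / (4 * M) ≤ ((x * |y| : ℤ) : ℝ) := by
  intro x y hx hxq _ _ hmod
  obtain ⟨-, hl, -, hval⟩ := hc
  have hq : (0 : ℤ) < q := by omega
  have ha : ((a : ℤ) : ℚ) = cfVal c * ((q : ℤ) : ℚ) := by
    push_cast
    rw [hval, div_mul_cancel₀]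
    exact_mod_cast hq.ne'
  have hQq := continuant_length_succ hl ha hq (Nat.isCoprime_iff_coprime.mpr hco.symm)
  obtain ⟨i, hi, hQx, hxQ⟩ := exists_continuant_le_lt hx (hxq.trans_eq hQq.symm)
  obtain ⟨k, hk⟩ := hmod.dvd
  have hry : euclidRem (partialQuot c) q a (i + 1) ≤ |y| := by
    have := euclidRem_le_abs_sub hl ha hq (j := i + 1) hi (-k) (by omega) hxQ
    rwa [show (a : ℤ) * x - q * -k = y by linarith] at this
  have hint : (q : ℤ) ≤ (partialQuot c i + 2) * (x * |y|) := by
    refine (le_mul_continuant_mul_euclidRem hl ha hq hi).trans (mul_le_mul_of_nonneg_left ?_ ?_)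
    · exact mul_le_mul hQx hry (euclidRem_pos hl ha hq _ hi).le (by omega)
    · linarith [one_le_partialQuot hl hi]
  have hcM : (partialQuot c i : ℝ) ≤ M := by
    simpa [partialQuot] using hbdd _ (List.getD_mem hi)
  have hintR : (q : ℝ) ≤ ((partialQuot c i : ℝ) + 2) * ((x * |y| : ℤ) : ℝ) := by
    exact_mod_cast hint
  have hxy : (0 : ℝ) ≤ ((x * |y| : ℤ) : ℝ) := by positivity
  rw [div_le_iff₀ (by positivity)]
  nlinarith

theorem stmt_1 (q a : ℕ) (hq : 2 ≤ q) (ha : 1 ≤ a) (ha' : a < q)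
    (hco : Nat.Coprime a q) (c : List ℕ) (hc : IsCF a q c) (M : ℝ) (hM : 1 ≤ M)
    (hbdd : ∀ cj ∈ c, (cj : ℝ) ≤ M) :
    ∀ x y : ℤ, 1 ≤ x → x < (q : ℤ) → 1 ≤ |y| → |y| < (q : ℤ) →
      (a : ℤ) * x ≡ y [ZMOD (q : ℤ)] → (q : ℝ) / (4 * M) ≤ ((x * |y| : ℤ) : ℝ) :=
  stmt_1_general q a hco c hc M hM hbdd
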